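/- arXiv:1406.5882 — 7 statements merged into one kernel-verified Lean document; each statement's English description precedes it below -/
import Mathlib

section
/- Let n ≥ 1, let V : ℝ → Matrix (Fin n) (Fin n) ℝ, let E ∈ ℝ, and let Y, Y₁ : ℝ → Matrix (Fin n) (Fin n) ℝ be such that Y has derivative Y₁(x) at every x, Y₁ has derivative (V(x₀) − E•I)·Y(x₀) at the point x₀, and Y₁(x₀) is invertible. Then the map Ψ : x ↦ Y(x)·(Y₁(x))⁻¹ is differentiable at x₀ with derivative Ψ'(x₀) = I − Ψ(x₀)·(V(x₀) − E•I)·Ψ(x₀). (This is the matrix Riccati differential equation satisfied by the inverse logarithmic derivative of a solution of the coupled-channel Schrödinger equation Y'' = (V(x) − E·I)Y.) -/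
/-! Differentiating `Ψ = Y · (Y')⁻¹` by the product rule and the derivative `-u⁻¹ · h · u⁻¹` of
inversion gives `Ψ' = Y' (Y')⁻¹ - Y (Y')⁻¹ Y'' (Y')⁻¹ = 1 - Ψ A Ψ` once `Y'' = A Y`. -/

section NormedAlgebra

variable {𝕜 R : Type*} [NontriviallyNormedField 𝕜] [NormedRing R] [NormedAlgebra 𝕜 R]
  [HasSummableGeomSeries R] {f Y Y₁ : 𝕜 → R} {f' A : R} {x : 𝕜}

theorem HasDerivAt.ringInverse (hf : HasDerivAt f f' x) (hx : IsUnit (f x)) :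
    HasDerivAt (fun t => Ring.inverse (f t))
      (-(Ring.inverse (f x) * f' * Ring.inverse (f x))) x := by
  obtain ⟨u, hu⟩ := hx
  have h := (hu ▸ hasFDerivAt_ringInverse (𝕜 := 𝕜) u).comp_hasDerivAt x hf
  simpa [Function.comp_def, ← hu] using h

theorem hasDerivAt_mul_ringInverse_riccati (hY : HasDerivAt Y (Y₁ x) x)
    (hY₁ : HasDerivAt Y₁ (A * Y x) x) (hx : IsUnit (Y₁ x)) :
    HasDerivAt (fun t => Y t * Ring.inverse (Y₁ t))
      (1 - Y x * Ring.inverse (Y₁ x) * A * (Y x * Ring.inverse (Y₁ x))) x := by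
  convert hY.fun_mul (hY₁.ringInverse hx) using 1
  rw [Ring.mul_inverse_cancel _ hx]
  noncomm_ring

end NormedAlgebra

theorem riccati_of_schrodinger_general (n : ℕ)
    (V : ℝ → Matrix (Fin n) (Fin n) ℝ) (E : ℝ)
    (Y Y₁ : ℝ → Matrix (Fin n) (Fin n) ℝ) (x₀ : ℝ)
    (hY : ∀ x, HasDerivAt Y (Y₁ x) x)
    (hY₁ : HasDerivAt Y₁ ((V x₀ - E • (1 : Matrix (Fin n) (Fin n) ℝ)) * Y x₀) x₀)
    (hinv : IsUnit (Y₁ x₀)) :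
    HasDerivAt (fun x => Y x * (Y₁ x)⁻¹)
      (1 - (Y x₀ * (Y₁ x₀)⁻¹) * (V x₀ - E • (1 : Matrix (Fin n) (Fin n) ℝ)) *
        (Y x₀ * (Y₁ x₀)⁻¹)) x₀ := by
  -- The `L∞`-operator norm makes matrices a normed algebra whose topology is, definitionally,
  -- the entrywise one used in the statement, so derivatives for either structure agree.
  let := Matrix.linftyOpNormedRing (n := Fin n) (α := ℝ)
  let := Matrix.linftyOpNormedAlgebra (n := Fin n) (R := ℝ) (α := ℝ)
  have : HasSummableGeomSeries (Matrix (Fin n) (Fin n) ℝ) :=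
    @instHasSummableGeomSeriesOfCompleteSpace _ _ (FiniteDimensional.complete ℝ _)
  simp only [Matrix.nonsing_inv_eq_ringInverse]
  exact hasDerivAt_mul_ringInverse_riccati (hY x₀) hY₁ hinv

/-- The inverse logarithmic derivative `Ψ = Y·(Y')⁻¹` of a solution of the
coupled-channel Schrödinger equation `Y'' = (V(x) - E·I)·Y` satisfies the
matrix Riccati equation `Ψ' = I - Ψ·(V - E·I)·Ψ`. -/
theorem riccati_of_schrodinger (n : ℕ) (hn : 1 ≤ n)
    (V : ℝ → Matrix (Fin n) (Fin n) ℝ) (E : ℝ)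
    (Y Y₁ : ℝ → Matrix (Fin n) (Fin n) ℝ) (x₀ : ℝ)
    (hY : ∀ x, HasDerivAt Y (Y₁ x) x)
    (hY₁ : HasDerivAt Y₁ ((V x₀ - E • (1 : Matrix (Fin n) (Fin n) ℝ)) * Y x₀) x₀)
    (hinv : IsUnit (Y₁ x₀)) :
    HasDerivAt (fun x => Y x * (Y₁ x)⁻¹)
      (1 - (Y x₀ * (Y₁ x₀)⁻¹) * (V x₀ - E • (1 : Matrix (Fin n) (Fin n) ℝ)) *
        (Y x₀ * (Y₁ x₀)⁻¹)) x₀ :=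
  riccati_of_schrodinger_general n V E Y Y₁ x₀ hY hY₁ hinv
end

section
/- Let n ≥ 1, let V : ℝ → Matrix (Fin n) (Fin n) ℝ with V(x) symmetric for every x, let E ∈ ℝ, and let Y, Y₁ : ℝ → Matrix (Fin n) (Fin n) ℝ be such that Y has derivative Y₁(x) at every x and Y₁ has derivative (V(x) − E•I)·Y(x) at every x. Then the function x ↦ Y(x)ᵀ·Y₁(x) − Y₁(x)ᵀ·Y(x) is constant on ℝ. In particular, if Y(a)ᵀ·Y₁(a) = Y₁(a)ᵀ·Y(a) for some a, then for every x at which Y₁(x) is invertible, the matrix Ψ(x) = Y(x)·(Y₁(x))⁻¹ is symmetric. -/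
attribute [local instance] Matrix.normedAddCommGroup Matrix.normedSpace

open scoped Matrix

/-!
Differentiating `W = Yᵀ Y' - Y'ᵀ Y` with `Y'' = Q Y` leaves `Yᵀ Q Y - Yᵀ Qᵀ Y`, which vanishes
because `Q = V - E • 1` is symmetric; so `W` is constant. If `W` vanishes, then
`Yᵀ Y' = Y'ᵀ Y`, and conjugating by `(Y')⁻¹` turns this into `Ψᵀ = Ψ` for `Ψ = Y (Y')⁻¹`.
-/

section Calculus

variable {𝕜 𝔸 : Type*} [NontriviallyNormedField 𝕜] [NormedRing 𝔸] [NormedAlgebra 𝕜 𝔸] {x : 𝕜}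

theorem hasDerivAt_matrix_iff {m n : Type*} [Fintype n] {A : 𝕜 → Matrix m n 𝔸}
    {A' : Matrix m n 𝔸} :
    HasDerivAt A A' x ↔ ∀ i j, HasDerivAt (fun t ↦ A t i j) (A' i j) x :=
  hasDerivAt_pi.trans <| forall_congr' fun _ ↦ hasDerivAt_pi

variable {l m n : Type*} [Fintype m] [Fintype n]

theorem HasDerivAt.matrix_transpose {A : 𝕜 → Matrix m n 𝔸} {A' : Matrix m n 𝔸}
    (hA : HasDerivAt A A' x) : HasDerivAt (fun t ↦ (A t)ᵀ) A'ᵀ x :=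
  hasDerivAt_matrix_iff.2 fun i j ↦ hasDerivAt_matrix_iff.1 hA j i

theorem HasDerivAt.matrix_mul {A : 𝕜 → Matrix l m 𝔸} {B : 𝕜 → Matrix m n 𝔸}
    {A' : Matrix l m 𝔸} {B' : Matrix m n 𝔸} (hA : HasDerivAt A A' x) (hB : HasDerivAt B B' x) :
    HasDerivAt (fun t ↦ A t * B t) (A' * B x + A x * B') x := by
  refine hasDerivAt_matrix_iff.2 fun i j ↦ ?_
  simp only [Matrix.add_apply, Matrix.mul_apply, ← Finset.sum_add_distrib]
  exact HasDerivAt.fun_sum fun k _ ↦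
    (hasDerivAt_matrix_iff.1 hA i k).mul (hasDerivAt_matrix_iff.1 hB k j)

end Calculus

namespace Matrix

variable {𝕜 n : Type*} [Fintype n]

def wronskian [NontriviallyNormedField 𝕜] (Y Y₁ : 𝕜 → Matrix n n 𝕜) (x : 𝕜) : Matrix n n 𝕜 :=
  (Y x)ᵀ * Y₁ x - (Y₁ x)ᵀ * Y x

theorem hasDerivAt_wronskian_of_isSymm [NontriviallyNormedField 𝕜] {Q Y Y₁ : 𝕜 → Matrix n n 𝕜}
    {x : 𝕜} (hQ : (Q x).IsSymm) (hY : HasDerivAt Y (Y₁ x) x)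
    (hY₁ : HasDerivAt Y₁ (Q x * Y x) x) : HasDerivAt (wronskian Y Y₁) 0 x := by
  have hW := (hY.matrix_transpose.matrix_mul hY₁).fun_sub (hY₁.matrix_transpose.matrix_mul hY)
  rwa [transpose_mul, hQ, Matrix.mul_assoc, add_sub_add_comm, sub_add_sub_cancel,
    sub_self] at hW

theorem wronskian_eq_of_isSymm [RCLike 𝕜] {Q Y Y₁ : 𝕜 → Matrix n n 𝕜} (hQ : ∀ x, (Q x).IsSymm)
    (hY : ∀ x, HasDerivAt Y (Y₁ x) x) (hY₁ : ∀ x, HasDerivAt Y₁ (Q x * Y x) x) (x y : 𝕜) :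
    wronskian Y Y₁ x = wronskian Y Y₁ y :=
  have hW t := hasDerivAt_wronskian_of_isSymm (hQ t) (hY t) (hY₁ t)
  is_const_of_deriv_eq_zero (fun t ↦ (hW t).differentiableAt) (fun t ↦ (hW t).deriv) x y

theorem isSymm_mul_nonsing_inv {R : Type*} [CommRing R] [DecidableEq n] {A B : Matrix n n R}
    (hAB : Aᵀ * B = Bᵀ * A) (hB : IsUnit B) : (A * B⁻¹).IsSymm := by
  have hBdet : IsUnit B.det := (isUnit_iff_isUnit_det B).1 hB
  have hBtdet : IsUnit Bᵀ.det := by rwa [det_transpose]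
  calc (A * B⁻¹)ᵀ = Bᵀ⁻¹ * (Aᵀ * B) * B⁻¹ := by
        rw [transpose_mul, transpose_nonsing_inv, Matrix.mul_assoc,
          mul_nonsing_inv_cancel_right _ _ hBdet]
    _ = A * B⁻¹ := by
        rw [hAB, ← Matrix.mul_assoc, nonsing_inv_mul _ hBtdet, Matrix.one_mul]

end Matrix

theorem wronskian_const_and_psi_symm_general (n : ℕ)
    (V : ℝ → Matrix (Fin n) (Fin n) ℝ) (hV : ∀ x, (V x)ᵀ = V x) (E : ℝ)
    (Y Y₁ : ℝ → Matrix (Fin n) (Fin n) ℝ)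
    (hY : ∀ x, HasDerivAt Y (Y₁ x) x)
    (hY₁ : ∀ x, HasDerivAt Y₁ ((V x - E • (1 : Matrix (Fin n) (Fin n) ℝ)) * Y x) x) :
    (∀ x y : ℝ,
        (Y x)ᵀ * Y₁ x - (Y₁ x)ᵀ * Y x = (Y y)ᵀ * Y₁ y - (Y₁ y)ᵀ * Y y) ∧
    (∀ a : ℝ, (Y a)ᵀ * Y₁ a = (Y₁ a)ᵀ * Y a →
      ∀ x : ℝ, IsUnit (Y₁ x) → (Y x * (Y₁ x)⁻¹)ᵀ = Y x * (Y₁ x)⁻¹) := by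
  have hQ (x : ℝ) : (V x - E • (1 : Matrix (Fin n) (Fin n) ℝ)).IsSymm :=
    Matrix.IsSymm.sub (hV x) (Matrix.isSymm_one.smul E)
  have hW := Matrix.wronskian_eq_of_isSymm hQ hY hY₁
  refine ⟨hW, fun a ha x hx ↦ Matrix.isSymm_mul_nonsing_inv ?_ hx⟩
  rw [← sub_eq_zero]
  exact (hW x a).trans (sub_eq_zero.2 ha)

/-- For a symmetric-valued potential, the Wronskian-type matrix
`Yᵀ·Y' - (Y')ᵀ·Y` of a solution of `Y'' = (V(x) - E·I)·Y` is constant;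
in particular if it vanishes at one point then `Ψ = Y·(Y')⁻¹` is symmetric
wherever `Y'` is invertible. -/
theorem wronskian_const_and_psi_symm (n : ℕ) (hn : 1 ≤ n)
    (V : ℝ → Matrix (Fin n) (Fin n) ℝ) (hV : ∀ x, (V x)ᵀ = V x) (E : ℝ)
    (Y Y₁ : ℝ → Matrix (Fin n) (Fin n) ℝ)
    (hY : ∀ x, HasDerivAt Y (Y₁ x) x)
    (hY₁ : ∀ x, HasDerivAt Y₁ ((V x - E • (1 : Matrix (Fin n) (Fin n) ℝ)) * Y x) x) :
    (∀ x y : ℝ,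
        (Y x)ᵀ * Y₁ x - (Y₁ x)ᵀ * Y x = (Y y)ᵀ * Y₁ y - (Y₁ y)ᵀ * Y y) ∧
    (∀ a : ℝ, (Y a)ᵀ * Y₁ a = (Y₁ a)ᵀ * Y a →
      ∀ x : ℝ, IsUnit (Y₁ x) → (Y x * (Y₁ x)⁻¹)ᵀ = Y x * (Y₁ x)⁻¹) :=
  wronskian_const_and_psi_symm_general n V hV E Y Y₁ hY hY₁
end

section
/- Let n ≥ 1, a < b, c ∈ [a, b], E ∈ ℝ, and let V : ℝ → Matrix (Fin n) (Fin n) ℝ be continuous with V(x) symmetric for all x. Let A₁, A₂, B₁, B₂ be real n×n matrices with A₁·A₂ᵀ = A₂·A₁ᵀ, B₁·B₂ᵀ = B₂·B₁ᵀ, and such that the only v ∈ ℝⁿ with A₁ᵀ·v = 0 and A₂ᵀ·v = 0 is v = 0, and the only v ∈ ℝⁿ with B₁ᵀ·v = 0 and B₂ᵀ·v = 0 is v = 0. Let Y_L, Y_R : ℝ → Matrix (Fin n) (Fin n) ℝ be twice differentiable with Y_L''(x) = (V(x) − E·I)·Y_L(x) and Y_R''(x) = (V(x) − E·I)·Y_R(x)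 for all x, with Y_L(a) = A₂ᵀ, Y_L'(a) = −A₁ᵀ, Y_R(b) = B₂ᵀ, Y_R'(b) = −B₁ᵀ. Assume Y_L'(c) and Y_R'(c) are invertible and set Ψ_L(c) = Y_L(c)·(Y_L'(c))⁻¹ and Ψ_R(c) = Y_R(c)·(Y_R'(c))⁻¹. Then the following are equivalent: (i) there exists a twice differentiable y : ℝ → (Fin n → ℝ) with y''(x) = (V(x) − E·I).mulVec y(x) for all x ∈ [a,b], A₁.mulVec y(a) + A₂.mulVec y'(a) = 0, B₁.mulVec y(b) + B₂.mulVec y'(b) = 0, and y(x) ≠ 0 for some x ∈ [a,b]; (ii) det(Ψ_L(c) − Ψ_R(c)) = 0. -/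
/-!
By the conjointness and rank conditions, the Cauchy data `(y(a), y'(a))` satisfying the boundary
condition at `a` are exactly the vectors `(A₂ᵀ u, -A₁ᵀ u) = (Y_L(a) u, Y_L'(a) u)`. By uniqueness
for the linear system `(y, y')' = (y', (V - E) y)`, a solution therefore satisfies the left boundary
condition iff its Cauchy data at `c` are `(Y_L(c) u, Y_L'(c) u)` for some `u`, i.e. iff
`y(c) = Ψ_L(c) y'(c)`; likewise on the right. An eigenfunction thus gives the kernel vector
`y'(c) ≠ 0` of `Ψ_L(c) - Ψ_R(c)`, and a kernel vector `p` gives the eigenfunction with Cauchy data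
`(Ψ_L(c) p, p)` at `c`.
-/

attribute [local instance] Matrix.normedAddCommGroup Matrix.normedSpace

open scoped Matrix
open Set

/-- `y` (with first derivative `y₁`) is a solution of the coupled-channel
boundary value problem on `[a,b]`. -/
def IsBVPSolution (n : ℕ) (a b E : ℝ) (V : ℝ → Matrix (Fin n) (Fin n) ℝ)
    (A₁ A₂ B₁ B₂ : Matrix (Fin n) (Fin n) ℝ) (y y₁ : ℝ → Fin n → ℝ) : Prop :=
  (∀ x, HasDerivAt y (y₁ x) x) ∧
  (∀ x ∈ Icc a b,
    HasDerivAt y₁ ((V x - E • (1 : Matrix (Fin n) (Fin n) ℝ)).mulVec (y x)) x) ∧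
  A₁.mulVec (y a) + A₂.mulVec (y₁ a) = 0 ∧
  B₁.mulVec (y b) + B₂.mulVec (y₁ b) = 0

namespace Matrix

variable {K : Type*} [Field K]

theorem rank_eq_card_of_injective {m n : Type*} [Fintype n] {D : Matrix m n K}
    (hD : Function.Injective D.mulVecLin) : D.rank = Fintype.card n := by
  rw [rank, LinearMap.finrank_range_of_inj hD, Module.finrank_fintype_fun_eq_card]

theorem ker_mulVecLin_eq_range_of_mul_eq_zero {l m n : Type*} [Fintype m] [Fintype n]
    {C : Matrix l m K} {D : Matrix m n K} (hCD : C * D = 0)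
    (hrank : C.rank + D.rank = Fintype.card m) :
    LinearMap.ker C.mulVecLin = LinearMap.range D.mulVecLin := by
  refine (Submodule.eq_of_le_of_finrank_eq ?_ ?_).symm
  · rintro _ ⟨u, rfl⟩
    simp [mulVec_mulVec, hCD]
  · have := LinearMap.finrank_range_add_finrank_ker C.mulVecLin
    rw [Module.finrank_fintype_fun_eq_card] at this
    unfold rank at hrank
    omega

/-- `[A₁ A₂]` has full row rank, `(A₂ᵀ; -A₁ᵀ)` full column rank, and their product vanishes. -/
theorem mulVec_add_mulVec_eq_zero_iff {m : Type*} [Fintype m] {A₁ A₂ : Matrix m m K}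
    (hA : A₁ * A₂ᵀ = A₂ * A₁ᵀ) (hrank : ∀ v, A₁ᵀ *ᵥ v = 0 → A₂ᵀ *ᵥ v = 0 → v = 0)
    (p q : m → K) :
    A₁ *ᵥ p + A₂ *ᵥ q = 0 ↔ ∃ u, A₂ᵀ *ᵥ u = p ∧ -A₁ᵀ *ᵥ u = q := by
  set C := fromCols A₁ A₂
  set D := fromRows A₂ᵀ (-A₁ᵀ)
  have hCD : C * D = 0 := by simp [C, D, fromCols_mul_fromRows, hA]
  have hD : Function.Injective D.mulVecLin := by
    refine (injective_iff_map_eq_zero _).2 fun v hv => ?_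
    simp only [mulVecLin_apply, D, fromRows_mulVec, ← Sum.elim_zero_zero, Sum.elim_eq_iff,
      neg_mulVec, neg_eq_zero] at hv
    exact hrank v hv.2 hv.1
  have hC : Function.Injective Cᵀ.mulVecLin := by
    refine (injective_iff_map_eq_zero _).2 fun v hv => ?_
    simp only [mulVecLin_apply, C, transpose_fromCols, fromRows_mulVec, ← Sum.elim_zero_zero,
      Sum.elim_eq_iff] at hv
    exact hrank v hv.1 hv.2
  have hker := ker_mulVecLin_eq_range_of_mul_eq_zero hCD (by
    rw [← rank_transpose C, rank_eq_card_of_injective hC, rank_eq_card_of_injective hD,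
      Fintype.card_sum])
  simpa [C, D, fromCols_mulVec_sumElim, fromRows_mulVec, Sum.elim_eq_iff, eq_comm] using
    SetLike.ext_iff.1 hker (Sum.elim p q)

theorem exists_mulVec_eq_and_mulVec_eq_iff {m : Type*} [Fintype m] [DecidableEq m]
    {P Q : Matrix m m K} (hQ : IsUnit Q) (x p : m → K) :
    (∃ u, P *ᵥ u = x ∧ Q *ᵥ u = p) ↔ (P * Q⁻¹) *ᵥ p = x := by
  have hQ' : IsUnit Q.det := (isUnit_iff_isUnit_det Q).1 hQ
  constructor
  · rintro ⟨u, rfl, rfl⟩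
    rw [mulVec_mulVec, nonsing_inv_mul_cancel_right Q P hQ']
  · intro h
    refine ⟨Q⁻¹ *ᵥ p, by rw [mulVec_mulVec, h], ?_⟩
    rw [mulVec_mulVec, mul_nonsing_inv _ hQ', one_mulVec]

end Matrix

theorem eqOn_Icc_of_hasDerivAt_clm {E : Type*} [NormedAddCommGroup E] [NormedSpace ℝ E]
    {L : ℝ → E →L[ℝ] E} {f g : ℝ → E} {a b t₀ : ℝ}
    (hL : ContinuousOn L (Icc a b)) (ht₀ : t₀ ∈ Icc a b)
    (hf : ∀ t ∈ Icc a b, HasDerivAt f (L t (f t)) t)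
    (hg : ∀ t ∈ Icc a b, HasDerivAt g (L t (g t)) t) (h : f t₀ = g t₀) :
    EqOn f g (Icc a b) := by
  obtain ⟨C, hC⟩ := isCompact_Icc.exists_bound_of_continuousOn hL
  have hlip : ∀ t ∈ Icc a b, LipschitzOnWith C.toNNReal (L t) univ := fun t ht =>
    ((L t).lipschitz.weaken (by
      rw [← norm_toNNReal]; exact Real.toNNReal_le_toNNReal (hC t ht))).lipschitzOnWith
  have hfc : ContinuousOn f (Icc a b) := HasDerivAt.continuousOn hf
  have hgc : ContinuousOn g (Icc a b) := HasDerivAt.continuousOn hg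
  rw [← Icc_union_Icc_eq_Icc ht₀.1 ht₀.2]
  refine EqOn.union ?_ ?_
  · have hsub : Icc a t₀ ⊆ Icc a b := Icc_subset_Icc_right ht₀.2
    exact ODE_solution_unique_of_mem_Icc_left
      (fun t ht => hlip t (hsub (Ioc_subset_Icc_self ht)))
      (hfc.mono hsub) (fun t ht => (hf t (hsub (Ioc_subset_Icc_self ht))).hasDerivWithinAt)
      (fun _ _ => trivial)
      (hgc.mono hsub) (fun t ht => (hg t (hsub (Ioc_subset_Icc_self ht))).hasDerivWithinAt)
      (fun _ _ => trivial) h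
  · have hsub : Icc t₀ b ⊆ Icc a b := Icc_subset_Icc_left ht₀.1
    exact ODE_solution_unique_of_mem_Icc_right
      (fun t ht => hlip t (hsub (Ico_subset_Icc_self ht)))
      (hfc.mono hsub) (fun t ht => (hf t (hsub (Ico_subset_Icc_self ht))).hasDerivWithinAt)
      (fun _ _ => trivial)
      (hgc.mono hsub) (fun t ht => (hg t (hsub (Ico_subset_Icc_self ht))).hasDerivWithinAt)
      (fun _ _ => trivial) h

section Companion

variable {m : Type*} [Fintype m] [DecidableEq m]

/-- `(y, y₁) ↦ (y₁, A y)`, the first-order form of `y'' = A y`. -/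
noncomputable def companionCLM (A : Matrix m m ℝ) :
    (m → ℝ) × (m → ℝ) →L[ℝ] (m → ℝ) × (m → ℝ) :=
  (ContinuousLinearMap.snd ℝ _ _).prod
    ((LinearMap.toContinuousLinearMap (Matrix.toLin' A)).comp (ContinuousLinearMap.fst ℝ _ _))

theorem continuous_companionCLM : Continuous (companionCLM : Matrix m m ℝ → _) := by
  have hlin : Continuous fun A : Matrix m m ℝ =>
      LinearMap.toContinuousLinearMap (Matrix.toLin' A) :=
    (LinearMap.toContinuousLinearMap.toLinearMap ∘ₗ
      (Matrix.toLin' : Matrix m m ℝ ≃ₗ[ℝ] _).toLinearMap).continuous_of_finiteDimensional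
  exact (ContinuousLinearMap.prodₗᵢ ℝ).continuous.comp
    (continuous_const.prodMk (hlin.clm_comp continuous_const))

theorem HasDerivAt.mulVec_const {Y : ℝ → Matrix m m ℝ} {Y' : Matrix m m ℝ} {t : ℝ}
    (hY : HasDerivAt Y Y' t) (u : m → ℝ) : HasDerivAt (fun s => Y s *ᵥ u) (Y' *ᵥ u) t :=
  (LinearMap.toContinuousLinearMap (LinearMap.applyₗ u ∘ₗ
    (Matrix.toLin' : Matrix m m ℝ ≃ₗ[ℝ] _).toLinearMap)).hasFDerivAt.comp_hasDerivAt t hY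

theorem hasDerivAt_companionCLM_mulVec {M Y Y₁ : ℝ → Matrix m m ℝ} {t : ℝ}
    (hY : HasDerivAt Y (Y₁ t) t) (hY₁ : HasDerivAt Y₁ (M t * Y t) t) (u : m → ℝ) :
    HasDerivAt (fun s => (Y s *ᵥ u, Y₁ s *ᵥ u))
      (companionCLM (M t) (Y t *ᵥ u, Y₁ t *ᵥ u)) t :=
  (hY.mulVec_const u).prodMk ((hY₁.mulVec_const u).congr_deriv (Matrix.mulVec_mulVec ..).symm)

variable {M : ℝ → Matrix m m ℝ} {Z : ℝ → (m → ℝ) × (m → ℝ)} {a b c : ℝ}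

theorem eqOn_Icc_of_hasDerivAt_companionCLM (hM : ContinuousOn M (Icc a b)) {W : ℝ → _}
    {t₀ : ℝ} (ht₀ : t₀ ∈ Icc a b) (hZ : ∀ t ∈ Icc a b, HasDerivAt Z (companionCLM (M t) (Z t)) t)
    (hW : ∀ t ∈ Icc a b, HasDerivAt W (companionCLM (M t) (W t)) t) (h : Z t₀ = W t₀) :
    EqOn Z W (Icc a b) :=
  eqOn_Icc_of_hasDerivAt_clm (continuous_companionCLM.comp_continuousOn hM) ht₀ hZ hW h

theorem exists_fst_ne_zero_iff_ne_zero (hab : a < b) (hc : c ∈ Icc a b)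
    (hM : ContinuousOn M (Icc a b))
    (hZ : ∀ t ∈ Icc a b, HasDerivAt Z (companionCLM (M t) (Z t)) t) :
    (∃ x ∈ Icc a b, (Z x).1 ≠ 0) ↔ Z c ≠ 0 := by
  constructor
  · rintro ⟨x, hx, hZx⟩ hZc
    have hzero := eqOn_Icc_of_hasDerivAt_companionCLM hM hc hZ (W := fun _ => 0)
      (fun t _ => by simpa only [map_zero] using hasDerivAt_const t 0) hZc
    exact hZx (by simp [hzero hx])
  · intro hZc
    by_contra! hfst
    have hder : HasDerivWithinAt (fun t => (Z t).1) (Z c).2 (Icc a b) c :=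
      ((hasFDerivAt_fst (p := Z c)).comp_hasDerivAt c (hZ c hc)).hasDerivWithinAt
    have hder₀ : HasDerivWithinAt (fun t => (Z t).1) 0 (Icc a b) c :=
      (hasDerivWithinAt_const c _ 0).congr hfst (hfst c hc)
    exact hZc (Prod.ext (hfst c hc) ((uniqueDiffOn_Icc hab c hc).eq_deriv _ hder hder₀))

theorem boundary_condition_iff_mul_inv_mulVec_eq {Y Y₁ : ℝ → Matrix m m ℝ}
    {A₁ A₂ : Matrix m m ℝ} {t₁ : ℝ} (hM : ContinuousOn M (Icc a b)) (ht₁ : t₁ ∈ Icc a b)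
    (hc : c ∈ Icc a b) (hA : A₁ * A₂ᵀ = A₂ * A₁ᵀ)
    (hrank : ∀ v, A₁ᵀ *ᵥ v = 0 → A₂ᵀ *ᵥ v = 0 → v = 0)
    (hY : ∀ t, HasDerivAt Y (Y₁ t) t) (hY₁ : ∀ t, HasDerivAt Y₁ (M t * Y t) t)
    (hYt₁ : Y t₁ = A₂ᵀ) (hY₁t₁ : Y₁ t₁ = -A₁ᵀ) (hYc : IsUnit (Y₁ c))
    (hZ : ∀ t ∈ Icc a b, HasDerivAt Z (companionCLM (M t) (Z t)) t) :
    A₁ *ᵥ (Z t₁).1 + A₂ *ᵥ (Z t₁).2 = 0 ↔ (Y c * (Y₁ c)⁻¹) *ᵥ (Z c).2 = (Z c).1 := by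
  have hZY : ∀ u, ∀ t ∈ Icc a b, HasDerivAt (fun s => (Y s *ᵥ u, Y₁ s *ᵥ u))
      (companionCLM (M t) (Y t *ᵥ u, Y₁ t *ᵥ u)) t :=
    fun u t _ => hasDerivAt_companionCLM_mulVec (hY t) (hY₁ t) u
  have hdata : ∀ u, (Y t₁ *ᵥ u, Y₁ t₁ *ᵥ u) = Z t₁ ↔ (Y c *ᵥ u, Y₁ c *ᵥ u) = Z c := fun u =>
    ⟨fun h => eqOn_Icc_of_hasDerivAt_companionCLM hM ht₁ (hZY u) hZ h hc,
      fun h => eqOn_Icc_of_hasDerivAt_companionCLM hM hc (hZY u) hZ h ht₁⟩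
  rw [Matrix.mulVec_add_mulVec_eq_zero_iff hA hrank,
    ← Matrix.exists_mulVec_eq_and_mulVec_eq_iff hYc, ← hYt₁, ← hY₁t₁]
  exact exists_congr fun u => by simpa only [Prod.ext_iff] using hdata u

end Companion

theorem eigenvalue_iff_det_match_zero_general (n : ℕ) (a b c E : ℝ)
    (hab : a < b) (hc : c ∈ Icc a b)
    (V : ℝ → Matrix (Fin n) (Fin n) ℝ)
    (hVcont : Continuous V)
    (A₁ A₂ B₁ B₂ : Matrix (Fin n) (Fin n) ℝ)
    (hA : A₁ * A₂ᵀ = A₂ * A₁ᵀ) (hB : B₁ * B₂ᵀ = B₂ * B₁ᵀ)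
    (hArank : ∀ v : Fin n → ℝ, A₁ᵀ.mulVec v = 0 → A₂ᵀ.mulVec v = 0 → v = 0)
    (hBrank : ∀ v : Fin n → ℝ, B₁ᵀ.mulVec v = 0 → B₂ᵀ.mulVec v = 0 → v = 0)
    (YL YL₁ YR YR₁ : ℝ → Matrix (Fin n) (Fin n) ℝ)
    (hYL : ∀ x, HasDerivAt YL (YL₁ x) x)
    (hYL₁ : ∀ x, HasDerivAt YL₁ ((V x - E • (1 : Matrix (Fin n) (Fin n) ℝ)) * YL x) x)
    (hYR : ∀ x, HasDerivAt YR (YR₁ x) x)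
    (hYR₁ : ∀ x, HasDerivAt YR₁ ((V x - E • (1 : Matrix (Fin n) (Fin n) ℝ)) * YR x) x)
    (hYLa : YL a = A₂ᵀ) (hYL₁a : YL₁ a = -A₁ᵀ)
    (hYRb : YR b = B₂ᵀ) (hYR₁b : YR₁ b = -B₁ᵀ)
    (hLc : IsUnit (YL₁ c)) (hRc : IsUnit (YR₁ c)) :
    (∃ y y₁ : ℝ → Fin n → ℝ,
        IsBVPSolution n a b E V A₁ A₂ B₁ B₂ y y₁ ∧ ∃ x ∈ Icc a b, y x ≠ 0) ↔
    (YL c * (YL₁ c)⁻¹ - YR c * (YR₁ c)⁻¹).det = 0 := by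
  set M : ℝ → Matrix (Fin n) (Fin n) ℝ := fun x => V x - E • 1
  have hM : ContinuousOn M (Icc a b) := (hVcont.sub continuous_const).continuousOn
  have bcL := fun Z => boundary_condition_iff_mul_inv_mulVec_eq (Z := Z) hM
    (left_mem_Icc.2 hab.le) hc hA hArank hYL hYL₁ hYLa hYL₁a hLc
  have bcR := fun Z => boundary_condition_iff_mul_inv_mulVec_eq (Z := Z) hM
    (right_mem_Icc.2 hab.le) hc hB hBrank hYR hYR₁ hYRb hYR₁b hRc
  rw [← Matrix.exists_mulVec_eq_zero_iff]
  constructor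
  · rintro ⟨y, y₁, ⟨hy, hy₁, hya, hyb⟩, hne⟩
    have hZ : ∀ t ∈ Icc a b, HasDerivAt (fun s => (y s, y₁ s))
        (companionCLM (M t) (y t, y₁ t)) t := fun t ht => (hy t).prodMk (hy₁ t ht)
    have hL := (bcL _ hZ).1 hya
    have hR := (bcR _ hZ).1 hyb
    dsimp only at hL hR
    refine ⟨y₁ c, fun h₀ => (exists_fst_ne_zero_iff_ne_zero hab hc hM hZ).1 hne ?_, ?_⟩
    · rw [← hL, h₀, Matrix.mulVec_zero, Prod.mk_zero_zero]
    · rw [Matrix.sub_mulVec, hL, hR, sub_self]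
  · rintro ⟨p, hp, hΨ⟩
    rw [Matrix.sub_mulVec, sub_eq_zero] at hΨ
    obtain ⟨u, hu, hu₁⟩ := (Matrix.exists_mulVec_eq_and_mulVec_eq_iff (P := YL c) hLc _ p).2 rfl
    have hZ : ∀ t ∈ Icc a b, HasDerivAt (fun s => (YL s *ᵥ u, YL₁ s *ᵥ u))
        (companionCLM (M t) (YL t *ᵥ u, YL₁ t *ᵥ u)) t :=
      fun t _ => hasDerivAt_companionCLM_mulVec (hYL t) (hYL₁ t) u
    refine ⟨fun s => YL s *ᵥ u, fun s => YL₁ s *ᵥ u,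
      ⟨fun t => (hYL t).mulVec_const u,
        fun t _ => ((hYL₁ t).mulVec_const u).congr_deriv (Matrix.mulVec_mulVec ..).symm,
        (bcL _ hZ).2 ?_, (bcR _ hZ).2 ?_⟩, (exists_fst_ne_zero_iff_ne_zero hab hc hM hZ).2 ?_⟩
    · simp only [hu, hu₁]
    · simp only [hu, hu₁, hΨ]
    · simp [hu₁, hp]

/-- `E` is an eigenvalue of the coupled-channel boundary value problem
(i.e. there is a nontrivial solution satisfying both boundary conditions)
if and only if `det(Ψ_L(c) - Ψ_R(c)) = 0`, where `Ψ_L`, `Ψ_R` are the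
R-matrices of the left and right matrix solutions. -/
theorem eigenvalue_iff_det_match_zero (n : ℕ) (hn : 1 ≤ n) (a b c E : ℝ)
    (hab : a < b) (hc : c ∈ Icc a b)
    (V : ℝ → Matrix (Fin n) (Fin n) ℝ)
    (hVcont : Continuous V) (hVsymm : ∀ x, (V x)ᵀ = V x)
    (A₁ A₂ B₁ B₂ : Matrix (Fin n) (Fin n) ℝ)
    (hA : A₁ * A₂ᵀ = A₂ * A₁ᵀ) (hB : B₁ * B₂ᵀ = B₂ * B₁ᵀ)
    (hArank : ∀ v : Fin n → ℝ, A₁ᵀ.mulVec v = 0 → A₂ᵀ.mulVec v = 0 → v = 0)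
    (hBrank : ∀ v : Fin n → ℝ, B₁ᵀ.mulVec v = 0 → B₂ᵀ.mulVec v = 0 → v = 0)
    (YL YL₁ YR YR₁ : ℝ → Matrix (Fin n) (Fin n) ℝ)
    (hYL : ∀ x, HasDerivAt YL (YL₁ x) x)
    (hYL₁ : ∀ x, HasDerivAt YL₁ ((V x - E • (1 : Matrix (Fin n) (Fin n) ℝ)) * YL x) x)
    (hYR : ∀ x, HasDerivAt YR (YR₁ x) x)
    (hYR₁ : ∀ x, HasDerivAt YR₁ ((V x - E • (1 : Matrix (Fin n) (Fin n) ℝ)) * YR x) x)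
    (hYLa : YL a = A₂ᵀ) (hYL₁a : YL₁ a = -A₁ᵀ)
    (hYRb : YR b = B₂ᵀ) (hYR₁b : YR₁ b = -B₁ᵀ)
    (hLc : IsUnit (YL₁ c)) (hRc : IsUnit (YR₁ c)) :
    (∃ y y₁ : ℝ → Fin n → ℝ,
        IsBVPSolution n a b E V A₁ A₂ B₁ B₂ y y₁ ∧ ∃ x ∈ Icc a b, y x ≠ 0) ↔
    (YL c * (YL₁ c)⁻¹ - YR c * (YR₁ c)⁻¹).det = 0 :=
  eigenvalue_iff_det_match_zero_general n a b c E hab hc V hVcont A₁ A₂ B₁ B₂ hA hB hArank hBrank YL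
    YL₁ YR YR₁ hYL hYL₁ hYR hYR₁ hYLa hYL₁a hYRb hYR₁b hLc hRc
end

section
/- Let n ≥ 1, let V : ℝ → Matrix (Fin n) (Fin n) ℝ, E ∈ ℝ, and let Ψ : ℝ → Matrix (Fin n) (Fin n) ℝ be differentiable at a point x̂ with derivative Ψ'(x̂) = I − Ψ(x̂)ᵀ·(V(x̂) − E·I)·Ψ(x̂) (the Riccati equation for the R-matrix). If w ∈ ℝⁿ is a nonzero vector with Ψ(x̂).mulVec w = 0, then w ⬝ᵥ Ψ'(x̂).mulVec w = w ⬝ᵥ w > 0. (Hence the eigenvalues of Ψ(x), and therefore the phase angles φ_j(x), can only increase through zero, respectively through multiples of π, as x increases.) -/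
attribute [local instance] Matrix.normedAddCommGroup Matrix.normedSpace

open scoped Matrix

/-- If `Ψ` satisfies the Riccati equation `Ψ' = I - Ψᵀ·(V - E·I)·Ψ` at `xh`
and `w ≠ 0` is annihilated by `Ψ(xh)`, then the quadratic form of the
derivative at `w` equals `w ⬝ᵥ w > 0`; hence the eigenvalues of `Ψ` can only
increase through zero. -/
theorem riccati_quadratic_form_pos (n : ℕ) (hn : 1 ≤ n)
    (V : ℝ → Matrix (Fin n) (Fin n) ℝ) (E : ℝ)
    (Ψ : ℝ → Matrix (Fin n) (Fin n) ℝ) (Ψ' : Matrix (Fin n) (Fin n) ℝ) (xh : ℝ)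
    (hΨ : HasDerivAt Ψ Ψ' xh)
    (hRic : Ψ' = 1 - (Ψ xh)ᵀ * (V xh - E • (1 : Matrix (Fin n) (Fin n) ℝ)) * Ψ xh)
    (w : Fin n → ℝ) (hw : w ≠ 0) (hΨw : (Ψ xh).mulVec w = 0) :
    w ⬝ᵥ Ψ'.mulVec w = w ⬝ᵥ w ∧ 0 < w ⬝ᵥ w := by
  constructor
  · rw [hRic, Matrix.sub_mulVec, Matrix.mul_assoc,
      ← Matrix.mulVec_mulVec, ← Matrix.mulVec_mulVec, hΨw]
    simp
  · have : 0 ≤ w ⬝ᵥ w := Finset.sum_nonneg fun i _ => mul_self_nonneg _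
    rcases this.lt_or_eq with h | h
    · exact h
    · exact absurd (funext fun i => by
        have := (Finset.sum_eq_zero_iff_of_nonneg (fun i _ => mul_self_nonneg (w i))).mp h.symm i (Finset.mem_univ i)
        exact mul_self_eq_zero.mp this) hw
end

section
/- Let Ψ, F be real n×n matrices such that I − F·Ψ is invertible, and let w ∈ ℝⁿ satisfy Ψ.mulVec w = −(F.mulVec w). Then ((I − F·Ψ)⁻¹·(I + F·F)).mulVec w = w; in particular, if w ≠ 0 then w ⬝ᵥ ((I − F·Ψ)⁻¹·(I + F·F)).mulVec w = w ⬝ᵥ w > 0. -/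
open scoped Matrix

/-- If `I - F·Ψ` is invertible and `Ψ·w = -F·w`, then
`(I - F·Ψ)⁻¹·(I + F·F)` fixes `w`; in particular for `w ≠ 0` the associated
quadratic form at `w` equals `w ⬝ᵥ w > 0`. -/
theorem perturbed_mobius_fixes (n : ℕ) (Ψ F : Matrix (Fin n) (Fin n) ℝ)
    (h : IsUnit (1 - F * Ψ))
    (w : Fin n → ℝ) (hw : Ψ.mulVec w = -(F.mulVec w)) :
    ((1 - F * Ψ)⁻¹ * (1 + F * F)).mulVec w = w ∧
    (w ≠ 0 →
      w ⬝ᵥ ((1 - F * Ψ)⁻¹ * (1 + F * F)).mulVec w = w ⬝ᵥ w ∧ 0 < w ⬝ᵥ w) := by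
  have key : (1 + F * F).mulVec w = (1 - F * Ψ).mulVec w := by
    simp only [Matrix.add_mulVec, Matrix.sub_mulVec, Matrix.one_mulVec,
      ← Matrix.mulVec_mulVec, hw]
    simp [Matrix.mulVec_neg, sub_neg_eq_add, ← Matrix.mulVec_mulVec]
  have hfix : ((1 - F * Ψ)⁻¹ * (1 + F * F)).mulVec w = w := by
    rw [← Matrix.mulVec_mulVec, key, Matrix.mulVec_mulVec,
      Matrix.nonsing_inv_mul _ ((Matrix.isUnit_iff_isUnit_det _).mp h),
      Matrix.one_mulVec]
  refine ⟨hfix, fun hne => ⟨by rw [hfix], ?_⟩⟩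
  have : w ⬝ᵥ w = ∑ i, w i * w i := rfl
  rw [this]
  have hpos : 0 ≤ ∑ i, w i * w i := Finset.sum_nonneg fun i _ => mul_self_nonneg _
  rcases hpos.lt_or_eq with hlt | heq
  · exact hlt
  · exfalso
    apply hne
    funext i
    have := (Finset.sum_eq_zero_iff_of_nonneg (fun i _ => mul_self_nonneg (w i))).mp
      heq.symm i (Finset.mem_univ i)
    exact mul_self_eq_zero.mp this
end

section
/- Fix z ∈ ℝ and define f : ℝ → ℝ by f(δ) = δ·η₀(z·δ²)/ξ(z·δ²). Then at every point δ₀ with ξ(z·δ₀²) ≠ 0, the function f is differentiable with f'(δ₀) = 1 − z·f(δ₀)². (Thus the scalar CP-propagated ratio f = y/y' for the constant-coefficient equation y'' = z·y satisfies the scalar Riccati equation.) -/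
/-- The CP function `ξ`. -/
noncomputable def xi (z : ℝ) : ℝ :=
  if z ≤ 0 then Real.cos (Real.sqrt (-z)) else Real.cosh (Real.sqrt z)

/-- The CP function `η₀`. -/
noncomputable def eta0 (z : ℝ) : ℝ :=
  if z < 0 then Real.sin (Real.sqrt (-z)) / Real.sqrt (-z)
  else if z = 0 then 1
  else Real.sinh (Real.sqrt z) / Real.sqrt z

/-!
With `S δ = δ·η₀(zδ²)` and `C δ = ξ(zδ²)` one has `S' = C` and `C' = z·S`: for `z = -c² < 0` these are
`S = sin (cδ)/c`, `C = cos (cδ)`, for `z = c² > 0` the hyperbolic analogues, and for `z = 0` simply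
`S = δ`, `C = 1`. The quotient rule then gives `(S/C)' = (C² - z·S²)/C² = 1 - z·(S/C)²`.
-/

open Real

theorem HasDerivAt.div_of_riccati {S C : ℝ → ℝ} {z x : ℝ} (hS : HasDerivAt S (C x) x)
    (hC : HasDerivAt C (z * S x) x) (hx : C x ≠ 0) :
    HasDerivAt (fun t => S t / C t) (1 - z * (S x / C x) ^ 2) x :=
  (hS.div hC hx).congr_deriv (by field_simp)

lemma sqrt_mul_sq_eq_abs {a : ℝ} (ha : 0 ≤ a) (δ : ℝ) : √(a * δ ^ 2) = |√a * δ| := by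
  rw [sqrt_mul ha, sqrt_sq_eq_abs, abs_mul, abs_of_nonneg (sqrt_nonneg a)]

lemma xi_mul_sq_of_neg {z : ℝ} (hz : z < 0) (δ : ℝ) : xi (z * δ ^ 2) = cos (√(-z) * δ) := by
  rw [xi, if_pos (by nlinarith [sq_nonneg δ]), neg_mul_eq_neg_mul,
    sqrt_mul_sq_eq_abs (neg_nonneg.2 hz.le), cos_abs]

lemma xi_mul_sq_of_pos {z : ℝ} (hz : 0 < z) (δ : ℝ) : xi (z * δ ^ 2) = cosh (√z * δ) := by
  rcases eq_or_ne δ 0 with rfl | hδ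
  · simp [xi]
  · rw [xi, if_neg (not_le.2 (by positivity)), sqrt_mul_sq_eq_abs hz.le, cosh_abs]

lemma div_abs_of_odd {f : ℝ → ℝ} (hf : ∀ x, f (-x) = -f x) (x : ℝ) : f |x| / |x| = f x / x := by
  rcases abs_choice x with h | h <;> rw [h]
  rw [hf, neg_div_neg_eq]

lemma mul_eta0_mul_sq_of_neg {z : ℝ} (hz : z < 0) (δ : ℝ) :
    δ * eta0 (z * δ ^ 2) = sin (√(-z) * δ) / √(-z) := by
  have hc : 0 < √(-z) := sqrt_pos.2 (neg_pos.2 hz)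
  rcases eq_or_ne δ 0 with rfl | hδ
  · simp
  rw [eta0, if_pos (by nlinarith [sq_pos_of_ne_zero hδ]), neg_mul_eq_neg_mul,
    sqrt_mul_sq_eq_abs (neg_nonneg.2 hz.le), div_abs_of_odd sin_neg]
  field_simp

lemma mul_eta0_mul_sq_of_pos {z : ℝ} (hz : 0 < z) (δ : ℝ) :
    δ * eta0 (z * δ ^ 2) = sinh (√z * δ) / √z := by
  have hc : 0 < √z := sqrt_pos.2 hz
  rcases eq_or_ne δ 0 with rfl | hδ
  · simp
  have hzδ : 0 < z * δ ^ 2 := by positivity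
  rw [eta0, if_neg hzδ.not_gt, if_neg hzδ.ne', sqrt_mul_sq_eq_abs hz.le, div_abs_of_odd sinh_neg]
  field_simp

lemma hasDerivAt_mul_eta0_mul_sq (z δ : ℝ) :
    HasDerivAt (fun δ => δ * eta0 (z * δ ^ 2)) (xi (z * δ ^ 2)) δ := by
  rcases lt_trichotomy z 0 with hz | rfl | hz
  · have hc : √(-z) ≠ 0 := (sqrt_pos.2 (neg_pos.2 hz)).ne'
    rw [funext (mul_eta0_mul_sq_of_neg hz), xi_mul_sq_of_neg hz]
    exact ((((hasDerivAt_id' δ).const_mul _).sin).div_const _).congr_deriv (by field_simp)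
  · simpa [eta0, xi] using hasDerivAt_id' δ
  · have hc : √z ≠ 0 := (sqrt_pos.2 hz).ne'
    rw [funext (mul_eta0_mul_sq_of_pos hz), xi_mul_sq_of_pos hz]
    exact ((((hasDerivAt_id' δ).const_mul _).sinh).div_const _).congr_deriv (by field_simp)

lemma hasDerivAt_xi_mul_sq (z δ : ℝ) :
    HasDerivAt (fun δ => xi (z * δ ^ 2)) (z * (δ * eta0 (z * δ ^ 2))) δ := by
  rcases lt_trichotomy z 0 with hz | rfl | hz
  · have hc : √(-z) ≠ 0 := (sqrt_pos.2 (neg_pos.2 hz)).ne'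
    rw [funext (xi_mul_sq_of_neg hz), mul_eta0_mul_sq_of_neg hz]
    refine (((hasDerivAt_id' δ).const_mul _).cos).congr_deriv ?_
    field_simp
    rw [sq_sqrt (neg_nonneg.2 hz.le)]
    ring
  · simpa [xi] using hasDerivAt_const δ (1 : ℝ)
  · have hc : √z ≠ 0 := (sqrt_pos.2 hz).ne'
    rw [funext (xi_mul_sq_of_pos hz), mul_eta0_mul_sq_of_pos hz]
    refine (((hasDerivAt_id' δ).const_mul _).cosh).congr_deriv ?_
    field_simp
    rw [sq_sqrt hz.le]
    ring

/-- The scalar CP-propagated ratio `f(δ) = δ·η₀(z·δ²)/ξ(z·δ²)` satisfies the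
scalar Riccati equation `f' = 1 - z·f²` wherever `ξ(z·δ²) ≠ 0`. -/
theorem cp_ratio_riccati (z : ℝ) (δ₀ : ℝ) (h : xi (z * δ₀ ^ 2) ≠ 0) :
    HasDerivAt (fun δ : ℝ => δ * eta0 (z * δ ^ 2) / xi (z * δ ^ 2))
      (1 - z * (δ₀ * eta0 (z * δ₀ ^ 2) / xi (z * δ₀ ^ 2)) ^ 2) δ₀ :=
  (hasDerivAt_mul_eta0_mul_sq z δ₀).div_of_riccati (hasDerivAt_xi_mul_sq z δ₀) h
end

section
/- Let n ≥ 1, a < c, and let Y : ℝ → Matrix (Fin n) (Fin n) ℝ be continuous on [a, c]. Then the matrix G = ∫_a^c Y(t)ᵀ·Y(t) dt is positive semidefinite; and if moreover Y(x₀) is invertible for some x₀ ∈ [a, c], then G is positive definite, i.e. v ⬝ᵥ G.mulVec v > 0 for every nonzero v ∈ ℝⁿ. (This is the positive definiteness of the Gram-type integral ∫ Yᵀ Y dt appearing in the energy derivative ∂Ψ_L/∂E = (Y_L'ᵀ)⁻¹ (∫_a^c Y_Lᵀ Y_L dt) (Y_L')⁻¹ of the left R-matrix.) -/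
/-!
The quadratic form of an integral of matrices is the integral of the quadratic forms,
`vᵀ (∫ M) v = ∫ vᵀ M(t) v`. For `M = YᵀY` the integrand is `|Y(t) v|² ≥ 0`, and if `Y(x₀)` is
invertible it is a continuous function that is positive at `x₀`, so its integral over `[a, c]` is
positive.
-/

attribute [local instance] Matrix.normedAddCommGroup Matrix.normedSpace

open scoped Matrix

open MeasureTheory Set

namespace Matrix

variable {m : Type*} [Fintype m] {M : ℝ → Matrix m m ℝ} {a b : ℝ}

theorem intervalIntegral_apply (hab : a ≤ b) (hM : ContinuousOn M (Icc a b)) (i j : m) :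
    (∫ t in a..b, M t) i j = ∫ t in a..b, M t i j :=
  ((entryLinearMap ℝ ℝ i j).toContinuousLinearMap.intervalIntegral_comp_comm
    (hM.intervalIntegrable_of_Icc hab)).symm

theorem dotProduct_intervalIntegral_mulVec (hab : a ≤ b) (hM : ContinuousOn M (Icc a b))
    (v w : m → ℝ) : v ⬝ᵥ (∫ t in a..b, M t) *ᵥ w = ∫ t in a..b, v ⬝ᵥ M t *ᵥ w := by
  classical
  let L : Matrix m m ℝ →ₗ[ℝ] ℝ :=
    (LinearMap.applyₗ w).comp ((LinearMap.applyₗ v).comp (toLinearMap₂' ℝ).toLinearMap)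
  have hL (N : Matrix m m ℝ) : L N = v ⬝ᵥ N *ᵥ w := toLinearMap₂'_apply' N v w
  simp_rw [← hL]
  exact (L.toContinuousLinearMap.intervalIntegral_comp_comm
    (hM.intervalIntegrable_of_Icc (μ := volume) hab)).symm

theorem PosSemidef.intervalIntegral (hab : a ≤ b) (hM : ContinuousOn M (Icc a b))
    (hpsd : ∀ t ∈ Icc a b, (M t).PosSemidef) : (∫ t in a..b, M t).PosSemidef := by
  refine .of_dotProduct_mulVec_nonneg ?_ fun v => ?_
  · ext i j
    rw [conjTranspose_apply, star_trivial, intervalIntegral_apply hab hM,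
      intervalIntegral_apply hab hM]
    refine intervalIntegral.integral_congr fun t ht => ?_
    rw [uIcc_of_le hab] at ht
    exact (hpsd t ht).isHermitian.apply i j
  · rw [dotProduct_intervalIntegral_mulVec hab hM]
    exact intervalIntegral.integral_nonneg hab fun t ht => (hpsd t ht).dotProduct_mulVec_nonneg v

theorem PosDef.intervalIntegral (hab : a < b) (hM : ContinuousOn M (Icc a b))
    (hpsd : ∀ t ∈ Icc a b, (M t).PosSemidef) (hpd : ∃ t₀ ∈ Icc a b, (M t₀).PosDef) :
    (∫ t in a..b, M t).PosDef := by
  obtain ⟨t₀, ht₀, hM₀⟩ := hpd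
  refine .of_dotProduct_mulVec_pos (PosSemidef.intervalIntegral hab.le hM hpsd).isHermitian
    fun v hv => ?_
  rw [dotProduct_intervalIntegral_mulVec hab.le hM]
  refine intervalIntegral.integral_pos hab ?_
    (fun t ht => (hpsd t (Ioc_subset_Icc_self ht)).dotProduct_mulVec_nonneg v)
    ⟨t₀, ht₀, hM₀.dotProduct_mulVec_pos hv⟩
  fun_prop

end Matrix

theorem gram_integral_posdef_general (n : ℕ) (a c : ℝ) (hac : a < c)
    (Y : ℝ → Matrix (Fin n) (Fin n) ℝ)
    (hY : ContinuousOn Y (Set.Icc a c)) :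
    (∫ t in a..c, (Y t)ᵀ * Y t).PosSemidef ∧
    ((∃ x₀ ∈ Set.Icc a c, IsUnit (Y x₀)) →
      ∀ v : Fin n → ℝ, v ≠ 0 →
        0 < v ⬝ᵥ (∫ t in a..c, (Y t)ᵀ * Y t).mulVec v) := by
  have hG : ContinuousOn (fun t => (Y t)ᵀ * Y t) (Set.Icc a c) :=
    (continuous_id.matrix_transpose.comp_continuousOn hY).mul hY
  have hpsd (t : ℝ) : ((Y t)ᵀ * Y t).PosSemidef := by
    simpa only [Matrix.conjTranspose_eq_transpose_of_trivial] using
      Matrix.posSemidef_conjTranspose_mul_self (Y t)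
  refine ⟨.intervalIntegral hac.le hG fun t _ => hpsd t, fun ⟨x₀, hx₀, hY₀⟩ v hv => ?_⟩
  have hpd : ((Y x₀)ᵀ * Y x₀).PosDef := by
    simpa only [Matrix.conjTranspose_eq_transpose_of_trivial] using
      Matrix.PosDef.conjTranspose_mul_self _ (Matrix.mulVec_injective_iff_isUnit.2 hY₀)
  have hGpd := Matrix.PosDef.intervalIntegral hac hG (fun t _ => hpsd t) ⟨x₀, hx₀, hpd⟩
  simpa only [star_trivial] using hGpd.dotProduct_mulVec_pos hv

/-- The Gram-type integral `G = ∫_a^c Y(t)ᵀ·Y(t) dt` of a continuous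
matrix-valued function is positive semidefinite, and positive definite if
`Y(x₀)` is invertible for some `x₀ ∈ [a,c]`. -/
theorem gram_integral_posdef (n : ℕ) (hn : 1 ≤ n) (a c : ℝ) (hac : a < c)
    (Y : ℝ → Matrix (Fin n) (Fin n) ℝ)
    (hY : ContinuousOn Y (Set.Icc a c)) :
    (∫ t in a..c, (Y t)ᵀ * Y t).PosSemidef ∧
    ((∃ x₀ ∈ Set.Icc a c, IsUnit (Y x₀)) →
      ∀ v : Fin n → ℝ, v ≠ 0 →
        0 < v ⬝ᵥ (∫ t in a..c, (Y t)ᵀ * Y t).mulVec v) :=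
  gram_integral_posdef_general n a c hac Y hY
end
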